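/- arXiv:2404.18869 — 2 statements merged into one kernel-verified Lean document; each statement's English description precedes it below -/
import Mathlib

section
/- Let n ≥ 1, σ > 0, R > 0, ε ∈ (0, 1), and let μ̂_1, …, μ̂_{k'} ∈ ℝ^n with Voronoi cells V_1, …, V_{k'}. Let μ ∈ ℝ^n and suppose that for some index i, μ ∈ V_i and ‖μ − μ̂_i‖ ≤ R. Let ξ ∼ N(0, I_n) and Y = μ + σ ξ. Then with probability at least 1 − ε over ξ, every index i' with Y ∈ V_{i'} satisfies ‖μ − μ̂_{i'}‖ ≤ 3R + 2√2 σ √(ln(k'/ε)). -/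
open MeasureTheory Real
open scoped ENNReal

/-- The Gaussian measure `N(0, τ I_n)` on `ℝ^n`. -/
noncomputable def gaussianM (n : ℕ) (τ : ℝ) : Measure (EuclideanSpace ℝ (Fin n)) :=
  volume.withDensity fun x =>
    ENNReal.ofReal ((2 * π * τ) ^ (-(n : ℝ) / 2) * Real.exp (-‖x‖ ^ 2 / (2 * τ)))

open scoped RealInnerProductSpace

lemma integrable_gaussExp (n : ℕ) (t : ℝ) (u : EuclideanSpace ℝ (Fin n)) :
    Integrable (fun x : EuclideanSpace ℝ (Fin n) =>
      Real.exp (-(1/2) * ‖x‖^2 + t * ⟪u, x⟫)) := by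
  have h := (GaussianFourier.integrable_cexp_neg_mul_sq_norm_add
      (V := EuclideanSpace ℝ (Fin n)) (b := (1/2 : ℂ)) (by norm_num) (t : ℂ) u).re
  convert h using 2 with x
  rw [show (-(1/2:ℂ) * (‖x‖:ℂ)^2 + (t:ℂ) * ((⟪u,x⟫:ℝ):ℂ))
      = ((-(1/2) * ‖x‖^2 + t * ⟪u,x⟫ : ℝ) : ℂ) by push_cast; ring]
  rw [← Complex.ofReal_exp]
  simp only [RCLike.re_to_complex, Complex.ofReal_re]

lemma integral_gaussExp (n : ℕ) (t : ℝ) (u : EuclideanSpace ℝ (Fin n)) :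
    ∫ x : EuclideanSpace ℝ (Fin n), Real.exp (-(1/2) * ‖x‖^2 + t * ⟪u, x⟫)
      = (2*π) ^ ((n:ℝ)/2) * Real.exp (t^2 * ‖u‖^2 / 2) := by
  have h := GaussianFourier.integral_cexp_neg_mul_sq_norm_add
      (V := EuclideanSpace ℝ (Fin n)) (b := (1/2:ℂ)) (by norm_num) (t:ℂ) u
  have hfun : (fun x : EuclideanSpace ℝ (Fin n) =>
        Complex.exp (-(1/2:ℂ) * (‖x‖:ℂ)^2 + (t:ℂ) * ((⟪u,x⟫:ℝ):ℂ)))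
      = fun x => ((Real.exp (-(1/2) * ‖x‖^2 + t * ⟪u, x⟫) : ℝ) : ℂ) := by
    funext x
    rw [show (-(1/2:ℂ) * (‖x‖:ℂ)^2 + (t:ℂ) * ((⟪u,x⟫:ℝ):ℂ))
        = ((-(1/2) * ‖x‖^2 + t * ⟪u,x⟫ : ℝ) : ℂ) by push_cast; ring]
    exact (Complex.ofReal_exp _).symm
  rw [hfun] at h
  rw [show (∫ x : EuclideanSpace ℝ (Fin n),
      ((Real.exp (-(1/2) * ‖x‖^2 + t * ⟪u, x⟫) : ℝ) : ℂ))
    = ((∫ x : EuclideanSpace ℝ (Fin n),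
      Real.exp (-(1/2) * ‖x‖^2 + t * ⟪u, x⟫) : ℝ) : ℂ) from integral_ofReal] at h
  have hR : ((π:ℂ) / (1/2:ℂ)) ^ ((Module.finrank ℝ (EuclideanSpace ℝ (Fin n)) : ℂ) / 2)
        * Complex.exp ((t:ℂ)^2 * (‖u‖:ℂ)^2 / (4 * (1/2:ℂ)))
      = (((2*π) ^ ((n:ℝ)/2) * Real.exp (t^2 * ‖u‖^2 / 2) : ℝ) : ℂ) := by
    rw [finrank_euclideanSpace_fin]
    rw [show ((π:ℂ)/(1/2)) = ((2*π : ℝ) : ℂ) by push_cast; ring]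
    rw [show ((n:ℂ)/2) = (((n:ℝ)/2 : ℝ) : ℂ) by push_cast; ring]
    rw [← Complex.ofReal_cpow (mul_nonneg (by norm_num) Real.pi_pos.le)]
    rw [show ((t:ℂ)^2 * (‖u‖:ℂ)^2 / (4 * (1/2:ℂ))) = ((t^2 * ‖u‖^2/2 : ℝ) : ℂ) by push_cast; ring]
    rw [← Complex.ofReal_exp, ← Complex.ofReal_mul]
  rw [hR] at h
  exact_mod_cast h

lemma gaussianM_one_apply {n : ℕ} {S : Set (EuclideanSpace ℝ (Fin n))} (hS : MeasurableSet S) :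
    gaussianM n 1 S
      = ∫⁻ x in S, ENNReal.ofReal ((2*π) ^ (-(n:ℝ)/2) * Real.exp (-(1/2) * ‖x‖^2)) := by
  rw [gaussianM, withDensity_apply _ hS]
  congr 1
  funext x
  norm_num
  ring_nf

lemma cn_mul : ∀ n : ℕ, (2*π) ^ (-(n:ℝ)/2) * (2*π) ^ ((n:ℝ)/2) = 1 := by
  intro n
  rw [← Real.rpow_add (by positivity), show (-(n:ℝ)/2 + (n:ℝ)/2) = 0 by ring, Real.rpow_zero]

lemma gaussianM_one_univ (n : ℕ) : gaussianM n 1 Set.univ = 1 := by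
  rw [gaussianM_one_apply MeasurableSet.univ, Measure.restrict_univ]
  have h0 : ∀ x : EuclideanSpace ℝ (Fin n),
      (2*π) ^ (-(n:ℝ)/2) * Real.exp (-(1/2) * ‖x‖^2)
      = (2*π) ^ (-(n:ℝ)/2) * Real.exp (-(1/2) * ‖x‖^2 + (0:ℝ) * ⟪(0 : EuclideanSpace ℝ (Fin n)), x⟫) := by
    intro x; norm_num
  simp only [h0]
  rw [← ofReal_integral_eq_lintegral_ofReal
      ((integrable_gaussExp n 0 0).const_mul _)
      (Filter.Eventually.of_forall fun x => by positivity)]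
  rw [integral_const_mul, integral_gaussExp]
  simp [← mul_assoc, cn_mul n]

lemma gauss_chernoff {n : ℕ} (t : ℝ) (ht : 0 ≤ t) (u : EuclideanSpace ℝ (Fin n)) (hu : ‖u‖ = 1) :
    gaussianM n 1 {x | t ≤ ⟪u, x⟫} ≤ ENNReal.ofReal (Real.exp (-t^2/2)) := by
  have hcont : Continuous fun x : EuclideanSpace ℝ (Fin n) => (⟪u, x⟫ : ℝ) :=
    continuous_const.inner continuous_id
  have hS : MeasurableSet {x : EuclideanSpace ℝ (Fin n) | t ≤ ⟪u, x⟫} :=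
    measurableSet_le measurable_const hcont.measurable
  set c : ℝ := (2*π) ^ (-(n:ℝ)/2) with hc
  have hcpos : 0 < c := by rw [hc]; positivity
  set g : EuclideanSpace ℝ (Fin n) → ℝ :=
    fun x => Real.exp (-t^2) * (c * Real.exp (-(1/2) * ‖x‖^2 + t * ⟪u, x⟫)) with hg
  have hgm : Measurable fun x => ENNReal.ofReal (g x) := by
    apply Measurable.ennreal_ofReal
    fun_prop
  calc gaussianM n 1 {x | t ≤ ⟪u, x⟫}
      = ∫⁻ x in {x | t ≤ ⟪u, x⟫}, ENNReal.ofReal (c * Real.exp (-(1/2) * ‖x‖^2)) :=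
        gaussianM_one_apply hS
    _ ≤ ∫⁻ x in {x | t ≤ ⟪u, x⟫}, ENNReal.ofReal (g x) := by
        apply setLIntegral_mono hgm
        intro x hx
        apply ENNReal.ofReal_le_ofReal
        rw [hg]
        have h1 : Real.exp (-(1/2) * ‖x‖^2)
            ≤ Real.exp (-t^2) * Real.exp (-(1/2) * ‖x‖^2 + t * ⟪u, x⟫) := by
          rw [← Real.exp_add]
          apply Real.exp_le_exp.mpr
          have : t * t ≤ t * ⟪u, x⟫ := mul_le_mul_of_nonneg_left hx ht
          nlinarith
        calc c * Real.exp (-(1/2) * ‖x‖^2)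
            ≤ c * (Real.exp (-t^2) * Real.exp (-(1/2) * ‖x‖^2 + t * ⟪u, x⟫)) :=
              mul_le_mul_of_nonneg_left h1 hcpos.le
          _ = Real.exp (-t^2) * (c * Real.exp (-(1/2) * ‖x‖^2 + t * ⟪u, x⟫)) := by ring
    _ ≤ ∫⁻ x, ENNReal.ofReal (g x) := setLIntegral_le_lintegral _ _
    _ = ENNReal.ofReal (∫ x, g x) := by
        rw [← ofReal_integral_eq_lintegral_ofReal
          (((integrable_gaussExp n t u).const_mul c).const_mul _)
          (Filter.Eventually.of_forall fun x => by simp only [hg, Pi.zero_apply]; positivity)]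
    _ = ENNReal.ofReal (Real.exp (-t^2/2)) := by
        congr 1
        rw [hg]
        simp only [integral_const_mul]
        rw [integral_gaussExp, hu]
        rw [hc, show (2*π) ^ (-(n:ℝ)/2) * ((2*π) ^ ((n:ℝ)/2) * Real.exp (t^2*1^2/2))
            = ((2*π) ^ (-(n:ℝ)/2) * (2*π) ^ ((n:ℝ)/2)) * Real.exp (t^2*1^2/2) by ring,
          cn_mul n]
        rw [one_mul, ← Real.exp_add]
        congr 1
        ring

/-- **Noisy point does not stray far from the cluster center of its Voronoi cell.**
If `μ ∈ V_i` with `‖μ − μ̂_i‖ ≤ R` and `Y = μ + σξ`, `ξ ∼ N(0, I_n)`, then with probability at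
least `1 − ε` over `ξ`, every `i'` with `Y ∈ V_{i'}` satisfies
`‖μ − μ̂_{i'}‖ ≤ 3R + 2√2 σ √(ln(k'/ε))`. -/
theorem stmt4 (n : ℕ) (hn : 1 ≤ n) (σ R ε : ℝ) (hσ : 0 < σ) (hR : 0 < R)
    (hε : ε ∈ Set.Ioo (0 : ℝ) 1)
    (k' : ℕ) (hk' : 1 ≤ k') (μhat : Fin k' → EuclideanSpace ℝ (Fin n))
    (μ : EuclideanSpace ℝ (Fin n)) (i : Fin k')
    (hμV : ∀ j, dist μ (μhat i) ≤ dist μ (μhat j))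
    (hμR : dist μ (μhat i) ≤ R) :
    ENNReal.ofReal (1 - ε) ≤
      gaussianM n 1
        {ξ | ∀ i', (∀ j, dist (μ + σ • ξ) (μhat i') ≤ dist (μ + σ • ξ) (μhat j)) →
          dist μ (μhat i') ≤ 3 * R + 2 * Real.sqrt 2 * σ * Real.sqrt (Real.log (k' / ε))} := by
  obtain ⟨hε0, hε1⟩ := hε
  set s : ℝ := Real.sqrt (Real.log (k' / ε)) with hs
  have hk'R : (1:ℝ) ≤ (k':ℝ) := by exact_mod_cast hk'
  have hlogpos : 0 < Real.log (k' / ε) := by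
    apply Real.log_pos
    rw [lt_div_iff₀ hε0]
    nlinarith
  have hspos : 0 < s := Real.sqrt_pos.mpr hlogpos
  set t : ℝ := Real.sqrt 2 * s with hts
  have htpos : 0 < t := by positivity
  set B : ℝ := 3 * R + 2 * Real.sqrt 2 * σ * s with hB
  clear_value s t B
  set G : Set (EuclideanSpace ℝ (Fin n)) :=
    {ξ | ∀ i', (∀ j, dist (μ + σ • ξ) (μhat i') ≤ dist (μ + σ • ξ) (μhat j)) →
      dist μ (μhat i') ≤ B} with hG
  set u : Fin k' → EuclideanSpace ℝ (Fin n) :=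
    fun i' => ‖μhat i' - μhat i‖⁻¹ • (μhat i' - μhat i) with hu
  set T : Fin k' → Set (EuclideanSpace ℝ (Fin n)) :=
    fun i' => {ξ | t ≤ ⟪u i', ξ⟫} with hT
  -- inclusion
  have hsub : Gᶜ ⊆ ⋃ i', T i' := by
    intro ξ hξ
    simp only [hG, Set.mem_compl_iff, Set.mem_setOf_eq, not_forall] at hξ
    obtain ⟨i', hP, hQ⟩ := hξ
    push_neg at hQ
    refine Set.mem_iUnion.mpr ⟨i', ?_⟩
    set Y := μ + σ • ξ with hY
    set a := dist μ (μhat i) with ha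
    set b := dist μ (μhat i') with hb
    set d := dist (μhat i) (μhat i') with hd
    clear_value Y a b d
    have haR : a ≤ R := hμR
    have hBR : R < B := by nlinarith [Real.sqrt_nonneg 2]
    have hab : a < b := lt_of_le_of_lt haR (lt_trans hBR hQ)
    have hd1 : b ≤ a + d := by
      rw [ha, hb, hd]; exact dist_triangle μ (μhat i) (μhat i')
    have hdpos : 0 < d := by linarith
    have hd2 : d ≤ a + b := by
      rw [ha, hb, hd]
      calc dist (μhat i) (μhat i') ≤ dist (μhat i) μ + dist μ (μhat i') := dist_triangle _ _ _
        _ = dist μ (μhat i) + dist μ (μhat i') := by rw [dist_comm]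
    -- squared distance comparisons
    have hsq1 : ‖Y - μhat i'‖^2 ≤ ‖Y - μhat i‖^2 := by
      have := hP i
      rw [dist_eq_norm, dist_eq_norm] at this
      exact pow_le_pow_left₀ (norm_nonneg _) this 2
    have ha' : ‖μ - μhat i‖ = a := by rw [ha, dist_eq_norm]
    have hsq2 : ‖μ - μhat i‖^2 ≤ ‖μ - μhat i'‖^2 := by
      have h := hμV i'
      rw [dist_eq_norm] at h
      rw [ha']
      exact pow_le_pow_left₀ (by rw [← ha']; positivity) h 2
    have expand : ∀ x y : EuclideanSpace ℝ (Fin n),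
        ‖x - y‖^2 = ‖x‖^2 - 2 * ⟪x, y⟫ + ‖y‖^2 := fun x y => norm_sub_sq_real x y
    have hYz : ∀ z : EuclideanSpace ℝ (Fin n), ⟪Y, z⟫ = ⟪μ, z⟫ + σ * ⟪ξ, z⟫ := by
      intro z
      rw [hY, inner_add_left, real_inner_smul_left]
    have hbsq : b^2 = ‖μ‖^2 - 2 * ⟪μ, μhat i'⟫ + ‖μhat i'‖^2 := by
      rw [hb, dist_eq_norm, expand]
    have hasq : a^2 = ‖μ‖^2 - 2 * ⟪μ, μhat i⟫ + ‖μhat i‖^2 := by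
      rw [ha, dist_eq_norm, expand]
    have key : (b^2 - a^2) / 2 ≤ σ * (⟪ξ, μhat i'⟫ - ⟪ξ, μhat i⟫) := by
      rw [expand, expand] at hsq1
      rw [hYz, hYz] at hsq1
      linarith [hsq1, hbsq, hasq]
    -- lower bound on b^2 - a^2
    have habs : 2 * σ * t ≤ b - a := by
      have h1 : B - R ≤ b - a := by
        have hQ' : B < b := hQ
        linarith
      have h2 : 2 * σ * t ≤ B - R := by
        rw [hB, hts]
        have he : 2 * σ * (Real.sqrt 2 * s) = 2 * Real.sqrt 2 * σ * s := by ring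
        linarith
      linarith
    have hbb : 2 * σ * t * d ≤ b^2 - a^2 := by
      have hmm : (2 * σ * t) * d ≤ (b - a) * (a + b) :=
        mul_le_mul habs hd2 hdpos.le (by linarith)
      calc 2 * σ * t * d ≤ (b - a) * (a + b) := hmm
        _ = b^2 - a^2 := by ring
    have hinner : t * d ≤ ⟪ξ, μhat i' - μhat i⟫ := by
      rw [inner_sub_right]
      have h3 : σ * (t * d) ≤ σ * (⟪ξ, μhat i'⟫ - ⟪ξ, μhat i⟫) := by linarith [key, hbb]
      have h4 := (mul_le_mul_iff_right₀ hσ).mp h3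
      linarith [h4]
    have hnorm : ‖μhat i' - μhat i‖ = d := by
      rw [hd, dist_comm, dist_eq_norm]
    show t ≤ ⟪u i', ξ⟫
    rw [hu]
    simp only
    rw [real_inner_smul_left, hnorm, real_inner_comm]
    rw [show (⟪ξ, μhat i' - μhat i⟫ : ℝ) = inner ℝ ξ (μhat i' - μhat i) from rfl] at hinner
    calc t = d⁻¹ * (t * d) := by field_simp
      _ ≤ d⁻¹ * ⟪ξ, μhat i' - μhat i⟫ := by
          apply mul_le_mul_of_nonneg_left hinner (by positivity)
  -- measure bound on each T i'
  have hTbound : ∀ i', gaussianM n 1 (T i') ≤ ENNReal.ofReal (ε / k') := by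
    intro i'
    have hval : Real.exp (-t^2/2) = ε / k' := by
      rw [hts, mul_pow, sq_sqrt (by norm_num : (0:ℝ) ≤ 2), hs,
        sq_sqrt hlogpos.le]
      rw [show -(2 * Real.log (k'/ε))/2 = -Real.log (k'/ε) by ring]
      rw [Real.exp_neg, Real.exp_log (by positivity), inv_div]
    by_cases hzero : μhat i' - μhat i = 0
    · have : T i' = ∅ := by
        rw [hT]
        simp only
        rw [hu]
        simp only [hzero, norm_zero, smul_zero]
        ext ξ
        simp only [Set.mem_setOf_eq, Set.mem_empty_iff_false, iff_false, not_le,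
          inner_zero_left]
        exact htpos
      rw [this]
      simp
    · have hun : ‖u i'‖ = 1 := by
        rw [hu]
        simp only
        rw [norm_smul, norm_inv, norm_norm]
        exact inv_mul_cancel₀ (norm_ne_zero_iff.mpr hzero)
      calc gaussianM n 1 (T i') ≤ ENNReal.ofReal (Real.exp (-t^2/2)) :=
            gauss_chernoff t htpos.le (u i') hun
        _ = ENNReal.ofReal (ε / k') := by rw [hval]
  -- total bound
  have hcompl : gaussianM n 1 Gᶜ ≤ ENNReal.ofReal ε := by
    calc gaussianM n 1 Gᶜ ≤ gaussianM n 1 (⋃ i', T i') := measure_mono hsub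
      _ ≤ ∑ i', gaussianM n 1 (T i') := measure_iUnion_fintype_le _ _
      _ ≤ ∑ _i' : Fin k', ENNReal.ofReal (ε / k') :=
          Finset.sum_le_sum fun i' _ => hTbound i'
      _ = (k' : ℝ≥0∞) * ENNReal.ofReal (ε / k') := by
          rw [Finset.sum_const, Finset.card_univ, Fintype.card_fin, nsmul_eq_mul]
      _ = ENNReal.ofReal ε := by
          rw [← ENNReal.ofReal_natCast k', ← ENNReal.ofReal_mul (by positivity)]
          congr 1
          field_simp
  have huniv : (1 : ℝ≥0∞) ≤ gaussianM n 1 G + ENNReal.ofReal ε := by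
    calc (1 : ℝ≥0∞) = gaussianM n 1 Set.univ := (gaussianM_one_univ n).symm
      _ = gaussianM n 1 (G ∪ Gᶜ) := by rw [Set.union_compl_self]
      _ ≤ gaussianM n 1 G + gaussianM n 1 Gᶜ := measure_union_le _ _
      _ ≤ gaussianM n 1 G + ENNReal.ofReal ε := add_le_add_right hcompl _
  have : ENNReal.ofReal (1 - ε) = 1 - ENNReal.ofReal ε := by
    rw [ENNReal.ofReal_sub _ hε0.le, ENNReal.ofReal_one]
  rw [this]
  exact tsub_le_iff_right.mpr huniv
end

section
/- Let n ≥ 1, σ₀ > 0, σ > 0, let Q be a probability measure on ℝ^n, and set P₀ = Q * N(0, σ₀² I_n) and P_{σ²} = Q * N(0, (σ₀² + σ²) I_n). Then the total variation distance satisfies TV(P₀, P_{σ²}) ≤ (1/√2) · σ² √n / σ₀². -/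
open MeasureTheory Real
open scoped ENNReal

/-- The convolution `Q * N(0, τ I_n)`. -/
noncomputable def convGauss (n : ℕ) (Q : Measure (EuclideanSpace ℝ (Fin n))) (τ : ℝ) :
    Measure (EuclideanSpace ℝ (Fin n)) :=
  (Q.prod (gaussianM n τ)).map fun p => p.1 + p.2

namespace Stmt14Aux

variable {n : ℕ}

/-- A centered Gaussian-shaped function on `ℝ^n`. -/
noncomputable def gf (n : ℕ) (c b : ℝ) : EuclideanSpace ℝ (Fin n) → ℝ :=
  fun x => c * Real.exp (-b * ‖x‖ ^ 2)

lemma gf_nonneg {c b : ℝ} (hc : 0 ≤ c) (x : EuclideanSpace ℝ (Fin n)) : 0 ≤ gf n c b x :=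
  mul_nonneg hc (Real.exp_nonneg _)

lemma gf_continuous (c b : ℝ) : Continuous (gf n c b) := by
  unfold gf
  fun_prop

lemma gf_integrable (c : ℝ) {b : ℝ} (hb : 0 < b) : Integrable (gf n c b) := by
  apply Integrable.const_mul
  have h := (GaussianFourier.integrable_cexp_neg_mul_sq_norm_add (V := EuclideanSpace ℝ (Fin n))
    (b := (b : ℂ)) (by simpa using hb) 0 0).norm
  refine h.congr (Filter.Eventually.of_forall fun x => ?_)
  simp [Complex.norm_exp]
  exact Or.inl (by norm_cast)

lemma gf_integral (c : ℝ) {b : ℝ} (hb : 0 < b) :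
    ∫ x, gf n c b x = c * (π / b) ^ ((n : ℝ) / 2) := by
  unfold gf
  rw [integral_const_mul]
  rw [GaussianFourier.integral_rexp_neg_mul_sq_norm hb]
  congr 2
  simp

lemma gf_mul (c b c' b' : ℝ) (x : EuclideanSpace ℝ (Fin n)) :
    gf n c b x * gf n c' b' x = gf n (c * c') (b + b') x := by
  unfold gf
  rw [show -(b + b') * ‖x‖ ^ 2 = -b * ‖x‖ ^ 2 + -b' * ‖x‖ ^ 2 by ring, Real.exp_add]
  ring

lemma gf_sqrt {c : ℝ} (hc : 0 ≤ c) (b : ℝ) (x : EuclideanSpace ℝ (Fin n)) :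
    Real.sqrt (gf n c b x) = gf n (Real.sqrt c) (b / 2) x := by
  unfold gf
  rw [Real.sqrt_mul hc, ← Real.exp_half]
  ring_nf



/-- The Gaussian density. -/
noncomputable def pdfG (n : ℕ) (τ : ℝ) : EuclideanSpace ℝ (Fin n) → ℝ :=
  fun x => (2 * π * τ) ^ (-(n : ℝ) / 2) * Real.exp (-‖x‖ ^ 2 / (2 * τ))

lemma pdfG_eq_gf {τ : ℝ} (hτ : 0 < τ) :
    pdfG n τ = gf n ((2 * π * τ) ^ (-(n : ℝ) / 2)) (1 / (2 * τ)) := by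
  funext x
  unfold pdfG gf
  congr 2
  field_simp

lemma pdfG_pos_coeff {τ : ℝ} (hτ : 0 < τ) : 0 < (2 * π * τ) ^ (-(n : ℝ) / 2) :=
  Real.rpow_pos_of_pos (by positivity) _

lemma pdfG_integrable {τ : ℝ} (hτ : 0 < τ) : Integrable (pdfG n τ) := by
  rw [pdfG_eq_gf hτ]
  exact gf_integrable _ (by positivity)

lemma pdfG_integral {τ : ℝ} (hτ : 0 < τ) : ∫ x, pdfG n τ x = 1 := by
  rw [pdfG_eq_gf hτ, gf_integral _ (by positivity : (0:ℝ) < 1 / (2 * τ))]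
  have h1 : π / (1 / (2 * τ)) = 2 * π * τ := by field_simp
  have h2 : (0:ℝ) < 2 * π * τ := by positivity
  rw [h1, ← Real.rpow_add h2, show -(n:ℝ)/2 + (n:ℝ)/2 = 0 by ring, Real.rpow_zero]

lemma pdfG_nonneg {τ : ℝ} (hτ : 0 < τ) (x : EuclideanSpace ℝ (Fin n)) : 0 ≤ pdfG n τ x := by
  rw [pdfG_eq_gf hτ]
  exact gf_nonneg (pdfG_pos_coeff hτ).le x

lemma pdfG_continuous {τ : ℝ} (hτ : 0 < τ) : Continuous (pdfG n τ) := by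
  rw [pdfG_eq_gf hτ]; exact gf_continuous _ _

set_option maxHeartbeats 1000000 in
/-- Key analytic bound: the `L¹` distance between the two Gaussian densities. -/
lemma l1_bound (n : ℕ) (σ₀ σ : ℝ) (hσ₀ : 0 < σ₀) (hσ : 0 < σ) :
    ∫ x : EuclideanSpace ℝ (Fin n), |pdfG n (σ₀^2) x - pdfG n (σ₀^2 + σ^2) x|
      ≤ 2 * ((1 / Real.sqrt 2) * σ^2 * Real.sqrt n / σ₀^2) := by
  set τ₀ : ℝ := σ₀^2 with hτ₀def
  set τ₁ : ℝ := σ₀^2 + σ^2 with hτ₁def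
  have hτ₀ : 0 < τ₀ := by positivity
  have hτ₁ : 0 < τ₁ := by positivity
  set c₀ : ℝ := (2 * π * τ₀) ^ (-(n : ℝ) / 2) with hc₀def
  set c₁ : ℝ := (2 * π * τ₁) ^ (-(n : ℝ) / 2) with hc₁def
  have hc₀ : 0 < c₀ := pdfG_pos_coeff hτ₀
  have hc₁ : 0 < c₁ := pdfG_pos_coeff hτ₁
  set b₀ : ℝ := 1 / (2 * τ₀) with hb₀def
  set b₁ : ℝ := 1 / (2 * τ₁) with hb₁def
  have hb₀ : 0 < b₀ := by positivity
  have hb₁ : 0 < b₁ := by positivity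
  set f₀ := pdfG n τ₀ with hf₀def
  set f₁ := pdfG n τ₁ with hf₁def
  have hf₀gf : f₀ = gf n c₀ b₀ := pdfG_eq_gf hτ₀
  have hf₁gf : f₁ = gf n c₁ b₁ := pdfG_eq_gf hτ₁
  have hint₀ : Integrable f₀ := pdfG_integrable hτ₀
  have hint₁ : Integrable f₁ := pdfG_integrable hτ₁
  have hI₀ : ∫ x, f₀ x = 1 := pdfG_integral hτ₀
  have hI₁ : ∫ x, f₁ x = 1 := pdfG_integral hτ₁
  have hf₀nn : ∀ x, 0 ≤ f₀ x := pdfG_nonneg hτ₀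
  have hf₁nn : ∀ x, 0 ≤ f₁ x := pdfG_nonneg hτ₁
  -- the geometric-mean density ψ
  set bm : ℝ := b₀ / 2 + b₁ / 2 with hbmdef
  have hbm : 0 < bm := by positivity
  set ψ := gf n (Real.sqrt c₀ * Real.sqrt c₁) bm with hψdef
  have hsqrt₀ : ∀ x, Real.sqrt (f₀ x) = gf n (Real.sqrt c₀) (b₀ / 2) x := by
    intro x; rw [hf₀gf, gf_sqrt hc₀.le]
  have hsqrt₁ : ∀ x, Real.sqrt (f₁ x) = gf n (Real.sqrt c₁) (b₁ / 2) x := by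
    intro x; rw [hf₁gf, gf_sqrt hc₁.le]
  have hψmul : ∀ x, Real.sqrt (f₀ x) * Real.sqrt (f₁ x) = ψ x := by
    intro x; rw [hsqrt₀, hsqrt₁, gf_mul]
  have hψint : Integrable ψ := gf_integrable _ hbm
  -- the Bhattacharyya coefficient B and its closed form
  set B : ℝ := ∫ x, ψ x with hBdef
  have hBval : B = Real.sqrt c₀ * Real.sqrt c₁ * (π / bm) ^ ((n : ℝ) / 2) :=
    gf_integral _ hbm
  set u : ℝ := 4 * τ₀ * τ₁ / (τ₀ + τ₁) ^ 2 with hudef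
  have hu0 : 0 < u := by positivity
  have hu1 : u ≤ 1 := by
    rw [hudef, div_le_one (by positivity)]
    nlinarith [sq_nonneg (τ₁ - τ₀)]
  have hBu : B = u ^ ((n : ℝ) / 4) := by
    have e₀ : Real.sqrt c₀ = (2 * π * τ₀) ^ (-(n : ℝ) / 4) := by
      rw [hc₀def, Real.sqrt_eq_rpow, ← Real.rpow_mul (by positivity)]
      congr 1; ring
    have e₁ : Real.sqrt c₁ = (2 * π * τ₁) ^ (-(n : ℝ) / 4) := by
      rw [hc₁def, Real.sqrt_eq_rpow, ← Real.rpow_mul (by positivity)]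
      congr 1; ring
    set w : ℝ := 4 * π * τ₀ * τ₁ / (τ₀ + τ₁) with hwdef
    have hwpos : 0 < w := by positivity
    have ebm : π / bm = w := by
      rw [hbmdef, hb₀def, hb₁def, hwdef]
      field_simp
      ring
    have hp₀ : (0:ℝ) < 2 * π * τ₀ := by positivity
    have hp₁ : (0:ℝ) < 2 * π * τ₁ := by positivity
    have hu_log : Real.log u = 2 * Real.log w - Real.log (2 * π * τ₀) - Real.log (2 * π * τ₁) := by
      have hform : u = w ^ 2 / ((2 * π * τ₀) * (2 * π * τ₁)) := by
        rw [hudef, hwdef]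
        field_simp
        ring
      rw [hform, Real.log_div (by positivity) (by positivity),
        Real.log_mul hp₀.ne' hp₁.ne', Real.log_pow]
      push_cast
      ring
    have hLpos : (0:ℝ) < (2 * π * τ₀) ^ (-(n : ℝ) / 4) * (2 * π * τ₁) ^ (-(n : ℝ) / 4)
        * w ^ ((n : ℝ) / 2) := by
      have := Real.rpow_pos_of_pos hp₀ (-(n : ℝ) / 4)
      have := Real.rpow_pos_of_pos hp₁ (-(n : ℝ) / 4)
      have := Real.rpow_pos_of_pos hwpos ((n : ℝ) / 2)
      positivity
    have hRpos : (0:ℝ) < u ^ ((n : ℝ) / 4) := Real.rpow_pos_of_pos hu0 _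
    rw [hBval, e₀, e₁, ebm, ← Real.exp_log hLpos, ← Real.exp_log hRpos]
    congr 1
    rw [Real.log_mul (by positivity) (Real.rpow_pos_of_pos hwpos _).ne',
      Real.log_mul (Real.rpow_pos_of_pos hp₀ _).ne' (Real.rpow_pos_of_pos hp₁ _).ne',
      Real.log_rpow hp₀, Real.log_rpow hp₁, Real.log_rpow hwpos, Real.log_rpow hu0, hu_log]
    ring
  -- bounds on B
  set r : ℝ := u ^ ((1 : ℝ) / 4) with hrdef
  have hr0 : 0 < r := Real.rpow_pos_of_pos hu0 _
  have hr1 : r ≤ 1 := Real.rpow_le_one hu0.le hu1 (by norm_num)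
  have hur : u ≤ r := by
    calc u = u ^ (1 : ℝ) := (Real.rpow_one u).symm
    _ ≤ u ^ ((1:ℝ)/4) := Real.rpow_le_rpow_of_exponent_ge hu0 hu1 (by norm_num)
  have hBr : B = r ^ n := by
    rw [hBu, hrdef, ← Real.rpow_natCast (u ^ ((1:ℝ)/4)) n, ← Real.rpow_mul hu0.le]
    congr 1; ring
  have hB_le_one : B ≤ 1 := by
    rw [hBr]; exact pow_le_one₀ hr0.le hr1
  have hB_nonneg : 0 ≤ B := by rw [hBr]; positivity
  have hBlow : 1 - (n : ℝ) * (1 - r) ≤ B := by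
    rw [hBr]
    have := one_add_mul_le_pow (a := r - 1) (by linarith) n
    simp only [add_sub_cancel] at this
    linarith
  have h1u : 1 - u ≤ (σ^2)^2 / (4 * (σ₀^2)^2) := by
    have hp : (0:ℝ) < (τ₀ + τ₁)^2 := by positivity
    have h1 : 1 - u = (τ₁ - τ₀)^2 / (τ₀ + τ₁)^2 := by
      rw [hudef, eq_div_iff hp.ne', sub_mul, div_mul_cancel₀ _ hp.ne', one_mul]
      ring
    rw [h1]
    apply div_le_div₀ (by positivity)
    · apply le_of_eq; rw [hτ₀def, hτ₁def]; ring
    · positivity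
    · rw [hτ₀def, hτ₁def]; nlinarith [sq_nonneg σ, sq_nonneg σ₀]
  have h2B : 2 - 2 * B ≤ (n : ℝ) * ((σ^2)^2 / (σ₀^2)^2) / 2 := by
    have h3 : (n:ℝ) * (1 - r) ≤ (n:ℝ) * (1 - u) :=
      mul_le_mul_of_nonneg_left (by linarith) (Nat.cast_nonneg n)
    have h4 : (n:ℝ) * (1 - u) ≤ (n:ℝ) * ((σ^2)^2 / (4 * (σ₀^2)^2)) :=
      mul_le_mul_of_nonneg_left h1u (Nat.cast_nonneg n)
    have h5 : (n:ℝ) * ((σ^2)^2 / (4 * (σ₀^2)^2)) = (n : ℝ) * ((σ^2)^2 / (σ₀^2)^2) / 4 := by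
      ring
    nlinarith
  -- Cauchy–Schwarz setup
  set F : EuclideanSpace ℝ (Fin n) → ℝ := fun x => |Real.sqrt (f₀ x) - Real.sqrt (f₁ x)| with hFdef
  set G : EuclideanSpace ℝ (Fin n) → ℝ := fun x => Real.sqrt (f₀ x) + Real.sqrt (f₁ x) with hGdef
  have hFnn : ∀ x, 0 ≤ F x := fun x => abs_nonneg _
  have hGnn : ∀ x, 0 ≤ G x := fun x => add_nonneg (Real.sqrt_nonneg _) (Real.sqrt_nonneg _)
  have hFG : ∀ x, |f₀ x - f₁ x| = F x * G x := by
    intro x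
    have ha : Real.sqrt (f₀ x) ^ 2 = f₀ x := Real.sq_sqrt (hf₀nn x)
    have hb : Real.sqrt (f₁ x) ^ 2 = f₁ x := Real.sq_sqrt (hf₁nn x)
    rw [hFdef]
    calc |f₀ x - f₁ x|
        = |(Real.sqrt (f₀ x) - Real.sqrt (f₁ x)) * (Real.sqrt (f₀ x) + Real.sqrt (f₁ x))| := by
          congr 1; linear_combination hb - ha
      _ = F x * G x := by rw [abs_mul, abs_of_nonneg (hGnn x)]
  have hF2 : ∀ x, F x ^ 2 = f₀ x + f₁ x - 2 * ψ x := by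
    intro x
    rw [hFdef]
    simp only [sq_abs]
    have ha : Real.sqrt (f₀ x) ^ 2 = f₀ x := Real.sq_sqrt (hf₀nn x)
    have hb : Real.sqrt (f₁ x) ^ 2 = f₁ x := Real.sq_sqrt (hf₁nn x)
    rw [← hψmul x]; linear_combination ha + hb
  have hG2 : ∀ x, G x ^ 2 = f₀ x + f₁ x + 2 * ψ x := by
    intro x
    rw [hGdef]
    have ha : Real.sqrt (f₀ x) ^ 2 = f₀ x := Real.sq_sqrt (hf₀nn x)
    have hb : Real.sqrt (f₁ x) ^ 2 = f₁ x := Real.sq_sqrt (hf₁nn x)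
    rw [← hψmul x]; linear_combination ha + hb
  have hIF2 : Integrable (fun x => F x ^ 2) := by
    refine (((hint₀.add hint₁).sub (hψint.const_mul 2)).congr
      (Filter.Eventually.of_forall fun x => ?_))
    simpa using (hF2 x).symm
  have hIG2 : Integrable (fun x => G x ^ 2) := by
    refine (((hint₀.add hint₁).add (hψint.const_mul 2)).congr
      (Filter.Eventually.of_forall fun x => ?_))
    simpa using (hG2 x).symm
  have hintF2 : ∫ x, F x ^ 2 = 2 - 2 * B := by
    have e : (fun x => F x ^ 2) = (fun x => (f₀ x + f₁ x) - 2 * ψ x) := by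
      funext x; rw [hF2 x]
    calc ∫ x, F x ^ 2 = ∫ x, ((f₀ x + f₁ x) - 2 * ψ x) := by rw [e]
      _ = (∫ x, (f₀ x + f₁ x)) - ∫ x, 2 * ψ x :=
          integral_sub (hint₀.add hint₁) (hψint.const_mul 2)
      _ = ((∫ x, f₀ x) + ∫ x, f₁ x) - 2 * ∫ x, ψ x := by
          rw [integral_add hint₀ hint₁, integral_const_mul]
      _ = 2 - 2 * B := by rw [hI₀, hI₁, ← hBdef]; ring
  have hintG2 : ∫ x, G x ^ 2 = 2 + 2 * B := by
    have e : (fun x => G x ^ 2) = (fun x => (f₀ x + f₁ x) + 2 * ψ x) := by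
      funext x; rw [hG2 x]
    calc ∫ x, G x ^ 2 = ∫ x, ((f₀ x + f₁ x) + 2 * ψ x) := by rw [e]
      _ = (∫ x, (f₀ x + f₁ x)) + ∫ x, 2 * ψ x :=
          integral_add (hint₀.add hint₁) (hψint.const_mul 2)
      _ = ((∫ x, f₀ x) + ∫ x, f₁ x) + 2 * ∫ x, ψ x := by
          rw [integral_add hint₀ hint₁, integral_const_mul]
      _ = 2 + 2 * B := by rw [hI₀, hI₁, ← hBdef]; ring
  -- measurability
  have hcont₀ : Continuous f₀ := pdfG_continuous hτ₀
  have hcont₁ : Continuous f₁ := pdfG_continuous hτ₁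
  have hFcont : Continuous F := by
    rw [hFdef]
    exact ((Real.continuous_sqrt.comp hcont₀).sub (Real.continuous_sqrt.comp hcont₁)).abs
  have hGcont : Continuous G := by
    rw [hGdef]
    exact (Real.continuous_sqrt.comp hcont₀).add (Real.continuous_sqrt.comp hcont₁)
  have hmemF : MemLp F (ENNReal.ofReal 2) volume := by
    rw [show ENNReal.ofReal 2 = 2 by simp]
    exact (memLp_two_iff_integrable_sq hFcont.aestronglyMeasurable).mpr hIF2
  have hmemG : MemLp G (ENNReal.ofReal 2) volume := by
    rw [show ENNReal.ofReal 2 = 2 by simp]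
    exact (memLp_two_iff_integrable_sq hGcont.aestronglyMeasurable).mpr hIG2
  have hconj : Real.HolderConjugate 2 2 := by
    exact Real.HolderConjugate.two_two
  have hCS := integral_mul_le_Lp_mul_Lq_of_nonneg hconj
    (Filter.Eventually.of_forall hFnn) (Filter.Eventually.of_forall hGnn) hmemF hmemG
  have hrpow2 : ∀ h : EuclideanSpace ℝ (Fin n) → ℝ,
      (∫ x, h x ^ (2:ℝ)) = ∫ x, h x ^ 2 := by
    intro h
    congr 1; funext x; rw [Real.rpow_two]
  rw [hrpow2 F, hrpow2 G, hintF2, hintG2] at hCS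
  have hsq1 : ((2:ℝ) - 2 * B) ^ ((1:ℝ)/2) = Real.sqrt (2 - 2 * B) := by
    rw [Real.sqrt_eq_rpow]
  have hsq2 : ((2:ℝ) + 2 * B) ^ ((1:ℝ)/2) = Real.sqrt (2 + 2 * B) := by
    rw [Real.sqrt_eq_rpow]
  rw [hsq1, hsq2] at hCS
  -- conclude
  have hL1 : ∫ x, |f₀ x - f₁ x| = ∫ x, F x * G x := by
    congr 1; funext x; exact hFG x
  have hbd1 : Real.sqrt (2 + 2 * B) ≤ 2 := by
    have h4 : Real.sqrt 4 = 2 := by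
      rw [show (4:ℝ) = 2^2 by norm_num, Real.sqrt_sq (by norm_num : (0:ℝ) ≤ 2)]
    have := Real.sqrt_le_sqrt (show 2 + 2*B ≤ 4 by linarith)
    linarith
  set T : ℝ := (1 / Real.sqrt 2) * σ^2 * Real.sqrt n / σ₀^2 with hTdef
  have hTnn : 0 ≤ T := by positivity
  have hbd2 : Real.sqrt (2 - 2 * B) ≤ T := by
    have hT2 : T ^ 2 = (n : ℝ) * ((σ^2)^2 / (σ₀^2)^2) / 2 := by
      rw [hTdef]
      have h2 : Real.sqrt 2 ^ 2 = 2 := Real.sq_sqrt (by norm_num)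
      have hnn : Real.sqrt (n:ℝ) ^ 2 = (n:ℝ) := Real.sq_sqrt (Nat.cast_nonneg n)
      field_simp
      rw [h2, hnn]
      ring
    calc Real.sqrt (2 - 2 * B) ≤ Real.sqrt (T ^ 2) := by
          apply Real.sqrt_le_sqrt; rw [hT2]; exact h2B
      _ = T := Real.sqrt_sq hTnn
  calc ∫ x, |f₀ x - f₁ x| = ∫ x, F x * G x := hL1
    _ ≤ Real.sqrt (2 - 2 * B) * Real.sqrt (2 + 2 * B) := hCS
    _ ≤ T * 2 := by
        apply mul_le_mul hbd2 hbd1 (Real.sqrt_nonneg _) hTnn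
    _ = 2 * T := by ring



lemma lintegral_pdfG {τ : ℝ} (hτ : 0 < τ) :
    ∫⁻ x : EuclideanSpace ℝ (Fin n), ENNReal.ofReal (pdfG n τ x) = 1 := by
  rw [← ofReal_integral_eq_lintegral_ofReal (pdfG_integrable hτ)
      (Filter.Eventually.of_forall (pdfG_nonneg hτ)), pdfG_integral hτ]
  simp

end Stmt14Aux

instance gaussianM_sfinite (n : ℕ) (τ : ℝ) : MeasureTheory.SFinite (gaussianM n τ) := by
  unfold gaussianM
  infer_instance

open Stmt14Aux in
/-- **TV bound between a mixture and its smoothed version.** For `P₀ = Q * N(0, σ₀² I_n)` and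
`P_{σ²} = Q * N(0, (σ₀² + σ²) I_n)`, `TV(P₀, P_{σ²}) ≤ σ²√n/(√2 σ₀²)`: every measurable set `A`
satisfies `|P₀(A) − P_{σ²}(A)| ≤ (1/√2) σ² √n / σ₀²`. -/
theorem stmt14 (n : ℕ) (hn : 1 ≤ n) (σ₀ σ : ℝ) (hσ₀ : 0 < σ₀) (hσ : 0 < σ)
    (Q : Measure (EuclideanSpace ℝ (Fin n))) [IsProbabilityMeasure Q]
    (A : Set (EuclideanSpace ℝ (Fin n))) (hA : MeasurableSet A) :
    |(convGauss n Q (σ₀ ^ 2) A).toReal - (convGauss n Q (σ₀ ^ 2 + σ ^ 2) A).toReal|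
      ≤ (1 / Real.sqrt 2) * σ ^ 2 * Real.sqrt n / σ₀ ^ 2 := by
  have hτ₀ : (0:ℝ) < σ₀ ^ 2 := by positivity
  have hτ₁ : (0:ℝ) < σ₀ ^ 2 + σ ^ 2 := by positivity
  set τ₀ : ℝ := σ₀ ^ 2
  set τ₁ : ℝ := σ₀ ^ 2 + σ ^ 2
  set g₀ := pdfG n τ₀ with hg₀def
  set g₁ := pdfG n τ₁ with hg₁def
  have hgM : ∀ τ, gaussianM n τ = volume.withDensity
      (fun x => ENNReal.ofReal (pdfG n τ x)) := fun τ => rfl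
  have hint₀ : Integrable g₀ := pdfG_integrable hτ₀
  have hint₁ : Integrable g₁ := pdfG_integrable hτ₁
  have hI₀ : ∫ x, g₀ x = 1 := pdfG_integral hτ₀
  have hI₁ : ∫ x, g₁ x = 1 := pdfG_integral hτ₁
  have hIsub : ∫ x, (g₀ x - g₁ x) = 0 := by
    rw [integral_sub hint₀ hint₁, hI₀, hI₁]; ring
  have hIsub' : ∫ x, (g₁ x - g₀ x) = 0 := by
    rw [integral_sub hint₁ hint₀, hI₀, hI₁]; ring
  have habs : Integrable (fun x => |g₀ x - g₁ x|) := (hint₀.sub hint₁).abs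
  set δ : ℝ := (∫ x, |g₀ x - g₁ x|) / 2 with hδdef
  have hδnn : 0 ≤ δ := by
    apply div_nonneg _ (by norm_num)
    exact integral_nonneg fun x => abs_nonneg _
  -- the positive parts
  have key : ∀ (h₀ h₁ : EuclideanSpace ℝ (Fin n) → ℝ), Integrable h₀ → Integrable h₁ →
      (∫ x, (h₀ x - h₁ x)) = 0 → (∀ x, 0 ≤ h₁ x) →
      (fun x => |h₀ x - h₁ x|) = (fun x => |g₀ x - g₁ x|) →
      ∫⁻ x, ENNReal.ofReal (max (h₀ x - h₁ x) 0) = ENNReal.ofReal δ ∧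
      ∀ x, ENNReal.ofReal (h₀ x) ≤ ENNReal.ofReal (h₁ x)
        + ENNReal.ofReal (max (h₀ x - h₁ x) 0) := by
    intro h₀ h₁ hih₀ hih₁ hsub hnn₁ habs_eq
    have hsubint : Integrable (fun x => h₀ x - h₁ x) := hih₀.sub hih₁
    have hintp : Integrable (fun x => max (h₀ x - h₁ x) 0) := hsubint.pos_part
    have habs' : Integrable (fun x => |h₀ x - h₁ x|) := hsubint.abs
    constructor
    · rw [← ofReal_integral_eq_lintegral_ofReal hintp
        (Filter.Eventually.of_forall fun x => le_max_right _ _)]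
      congr 1
      have e : (fun x => max (h₀ x - h₁ x) 0)
          = fun x => (|h₀ x - h₁ x| + (h₀ x - h₁ x)) / 2 := by
        funext x
        rcases le_total 0 (h₀ x - h₁ x) with h | h
        · rw [max_eq_left h, abs_of_nonneg h]; ring
        · rw [max_eq_right h, abs_of_nonpos h]; ring
      rw [e]
      calc ∫ x, (|h₀ x - h₁ x| + (h₀ x - h₁ x)) / 2
          = (∫ x, (|h₀ x - h₁ x| + (h₀ x - h₁ x))) / 2 := integral_div _ _
        _ = ((∫ x, |h₀ x - h₁ x|) + ∫ x, (h₀ x - h₁ x)) / 2 := by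
            rw [integral_add habs' hsubint]
        _ = δ := by rw [hsub, hδdef, habs_eq]; ring
    · intro x
      have h1 : h₀ x ≤ h₁ x + max (h₀ x - h₁ x) 0 := by
        rcases le_total 0 (h₀ x - h₁ x) with h | h
        · rw [max_eq_left h]; linarith
        · rw [max_eq_right h]; linarith
      calc ENNReal.ofReal (h₀ x) ≤ ENNReal.ofReal (h₁ x + max (h₀ x - h₁ x) 0) :=
            ENNReal.ofReal_le_ofReal h1
        _ ≤ ENNReal.ofReal (h₁ x) + ENNReal.ofReal (max (h₀ x - h₁ x) 0) :=
            ENNReal.ofReal_add_le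
  -- expressing convGauss
  have hmeasadd : Measurable (fun p : EuclideanSpace ℝ (Fin n) × EuclideanSpace ℝ (Fin n)
      => p.1 + p.2) := measurable_fst.add measurable_snd
  have happ : ∀ τ, convGauss n Q τ A
      = ∫⁻ μ, gaussianM n τ ((fun x => μ + x) ⁻¹' A) ∂Q := by
    intro τ
    rw [convGauss, Measure.map_apply hmeasadd hA, Measure.prod_apply (hmeasadd hA)]
    rfl
  have hSmeas : ∀ μ : EuclideanSpace ℝ (Fin n),
      MeasurableSet ((fun x => μ + x) ⁻¹' A) := fun μ =>
    (measurable_id.const_add μ) hA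
  -- the one-sided comparison
  have hcomp : ∀ (h₀ h₁ : EuclideanSpace ℝ (Fin n) → ℝ), Integrable h₀ → Integrable h₁ →
      (∫ x, (h₀ x - h₁ x)) = 0 → (∀ x, 0 ≤ h₁ x) → Continuous h₁ →
      (fun x => |h₀ x - h₁ x|) = (fun x => |g₀ x - g₁ x|) →
      ∀ S : Set (EuclideanSpace ℝ (Fin n)), MeasurableSet S →
      ∫⁻ x in S, ENNReal.ofReal (h₀ x) ≤ (∫⁻ x in S, ENNReal.ofReal (h₁ x))
        + ENNReal.ofReal δ := by
    intro h₀ h₁ hih₀ hih₁ hsub hnn₁ hcont₁ habs_eq S hS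
    obtain ⟨hpp, hpt⟩ := key h₀ h₁ hih₀ hih₁ hsub hnn₁ habs_eq
    calc ∫⁻ x in S, ENNReal.ofReal (h₀ x)
        ≤ ∫⁻ x in S, (ENNReal.ofReal (h₁ x) + ENNReal.ofReal (max (h₀ x - h₁ x) 0)) :=
          lintegral_mono fun x => hpt x
      _ = (∫⁻ x in S, ENNReal.ofReal (h₁ x))
          + ∫⁻ x in S, ENNReal.ofReal (max (h₀ x - h₁ x) 0) :=
          lintegral_add_left (hcont₁.measurable.ennreal_ofReal) _
      _ ≤ (∫⁻ x in S, ENNReal.ofReal (h₁ x))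
          + ∫⁻ x, ENNReal.ofReal (max (h₀ x - h₁ x) 0) := by
          gcongr
          exact Measure.restrict_le_self
      _ = (∫⁻ x in S, ENNReal.ofReal (h₁ x)) + ENNReal.ofReal δ := by rw [hpp]
  have habs_eq₁ : (fun x => |g₁ x - g₀ x|) = (fun x => |g₀ x - g₁ x|) := by
    funext x; rw [abs_sub_comm]
  have hcont₀ : Continuous g₀ := pdfG_continuous hτ₀
  have hcont₁ : Continuous g₁ := pdfG_continuous hτ₁
  -- comparisons between the convolution measures
  have hmain : ∀ (h₀ h₁ : EuclideanSpace ℝ (Fin n) → ℝ) (τa τb : ℝ),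
      pdfG n τa = h₀ → pdfG n τb = h₁ →
      Integrable h₀ → Integrable h₁ →
      (∫ x, (h₀ x - h₁ x)) = 0 → (∀ x, 0 ≤ h₁ x) → Continuous h₁ →
      (fun x => |h₀ x - h₁ x|) = (fun x => |g₀ x - g₁ x|) →
      convGauss n Q τa A ≤ convGauss n Q τb A + ENNReal.ofReal δ := by
    intro h₀ h₁ τa τb hpa hpb hih₀ hih₁ hsub hnn₁ hcont hab
    rw [happ τa, happ τb]
    calc ∫⁻ μ, gaussianM n τa ((fun x => μ + x) ⁻¹' A) ∂Q
        ≤ ∫⁻ μ, (gaussianM n τb ((fun x => μ + x) ⁻¹' A) + ENNReal.ofReal δ) ∂Q := by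
          apply lintegral_mono
          intro μ
          dsimp only
          rw [hgM τa, hgM τb, withDensity_apply _ (hSmeas μ), withDensity_apply _ (hSmeas μ),
            hpa, hpb]
          exact hcomp h₀ h₁ hih₀ hih₁ hsub hnn₁ hcont hab _ (hSmeas μ)
      _ = (∫⁻ μ, gaussianM n τb ((fun x => μ + x) ⁻¹' A) ∂Q) + ENNReal.ofReal δ := by
          rw [lintegral_add_right _ measurable_const, lintegral_const, measure_univ, mul_one]
  have hle₀₁ : convGauss n Q τ₀ A ≤ convGauss n Q τ₁ A + ENNReal.ofReal δ :=
    hmain g₀ g₁ τ₀ τ₁ rfl rfl hint₀ hint₁ hIsub (pdfG_nonneg hτ₁) hcont₁ rfl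
  have hle₁₀ : convGauss n Q τ₁ A ≤ convGauss n Q τ₀ A + ENNReal.ofReal δ :=
    hmain g₁ g₀ τ₁ τ₀ rfl rfl hint₁ hint₀ hIsub' (pdfG_nonneg hτ₀) hcont₀ habs_eq₁
  -- finiteness
  have hfin : ∀ τ, 0 < τ → convGauss n Q τ A ≤ 1 := by
    intro τ hτ
    rw [happ τ]
    calc ∫⁻ μ, gaussianM n τ ((fun x => μ + x) ⁻¹' A) ∂Q
        ≤ ∫⁻ _, 1 ∂Q := by
          apply lintegral_mono
          intro μ
          dsimp only
          rw [hgM τ, withDensity_apply _ (hSmeas μ)]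
          calc ∫⁻ x in _, ENNReal.ofReal (pdfG n τ x)
              ≤ ∫⁻ x, ENNReal.ofReal (pdfG n τ x) := setLIntegral_le_lintegral _ _
            _ = 1 := lintegral_pdfG hτ
      _ = 1 := by rw [lintegral_const, measure_univ, mul_one]
  have ha := hfin τ₀ hτ₀
  have hb := hfin τ₁ hτ₁
  have hane : convGauss n Q τ₀ A ≠ ⊤ := (lt_of_le_of_lt ha ENNReal.one_lt_top).ne
  have hbne : convGauss n Q τ₁ A ≠ ⊤ := (lt_of_le_of_lt hb ENNReal.one_lt_top).ne
  have h1 : (convGauss n Q τ₀ A).toReal ≤ (convGauss n Q τ₁ A).toReal + δ := by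
    have := ENNReal.toReal_mono (by simp [hbne, ENNReal.add_ne_top]) hle₀₁
    rwa [ENNReal.toReal_add hbne ENNReal.ofReal_ne_top, ENNReal.toReal_ofReal hδnn] at this
  have h2 : (convGauss n Q τ₁ A).toReal ≤ (convGauss n Q τ₀ A).toReal + δ := by
    have := ENNReal.toReal_mono (by simp [hane, ENNReal.add_ne_top]) hle₁₀
    rwa [ENNReal.toReal_add hane ENNReal.ofReal_ne_top, ENNReal.toReal_ofReal hδnn] at this
  have hδT : δ ≤ (1 / Real.sqrt 2) * σ ^ 2 * Real.sqrt n / σ₀ ^ 2 := by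
    have := l1_bound n σ₀ σ hσ₀ hσ
    rw [hδdef, hg₀def, hg₁def]
    linarith
  rw [abs_sub_le_iff]
  constructor <;> linarith
end
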